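/- Assume in addition c₀ ∈ H³(a,b), and let (w⁰, c⁰) be a classical solution of the radial chemotaxis system with parameter ε = 0 on [a,b]×[0,T] with initial data (w₀, c₀) satisfying the compatibility conditions. (i) If w⁰(a,t) > 0 for some t ∈ [0,T], then there exists t₁ ∈ [0,T] such that E_a(t₁) ≠ 0 and w⁰(a,t₁) > 0. (ii) If w⁰(b,t) > 0 for some t ∈ [0,T], then there exists t₂ ∈ [0,T] such that E_b(t₂) ≠ 0 and w⁰(b,t₂) > 0. -/

import Mathlib

noncomputable section

/-- Partial derivative in the first (spatial) variable. -/
def dr (f : ℝ → ℝ → ℝ) : ℝ → ℝ → ℝ := fun r t => deriv (fun s => f s t) r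

/-- Partial derivative in the second (time) variable. -/
def dt (f : ℝ → ℝ → ℝ) : ℝ → ℝ → ℝ := fun r t => deriv (fun s => f r s) t

/-- Squared L² norm on (a,b). -/
def L2Sq (a b : ℝ) (f : ℝ → ℝ) : ℝ := ∫ r in a..b, (f r) ^ 2

/-- Squared Hᵐ norm on (a,b). -/
def HSq (a b : ℝ) (m : ℕ) (f : ℝ → ℝ) : ℝ :=
  ∑ k ∈ Finset.range (m + 1), L2Sq a b (iteratedDeriv k f)

/-- Hᵐ norm on (a,b). -/
def Hnorm (a b : ℝ) (m : ℕ) (f : ℝ → ℝ) : ℝ := Real.sqrt (HSq a b m f)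

/-- Sup norm on [a,b] (the C[a,b] norm). -/
def CSup (a b : ℝ) (f : ℝ → ℝ) : ℝ := sSup ((fun r => |f r|) '' Set.Icc a b)

/-- Supremum over t ∈ (0,T]. -/
def supT (T : ℝ) (g : ℝ → ℝ) : ℝ := sSup (g '' Set.Ioc 0 T)

/-- Hypotheses on the initial data: Sobolev regularity (Hᵐ membership encoded as
`ContDiffOn` of the corresponding order on [a,b]), sign conditions, and the
compatibility conditions. -/
structure InitData (a b lam κ : ℝ) (mw mc : ℕ) (w₀ c₀ : ℝ → ℝ) : Prop where
  regw : ContDiffOn ℝ mw w₀ (Set.Icc a b)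
  regc : ContDiffOn ℝ mc c₀ (Set.Icc a b)
  w0_nonneg : ∀ r ∈ Set.Icc a b, 0 ≤ w₀ r
  c0_pos : ∀ r ∈ Set.Icc a b, 0 < c₀ r
  compat_wa : deriv w₀ a - w₀ a * deriv c₀ a = 0
  compat_wb : deriv w₀ b - w₀ b * deriv c₀ b = 0
  compat_ca : deriv c₀ a = -κ * (lam - c₀ a)
  compat_cb : deriv c₀ b = κ * (lam - c₀ b)

/-- A classical solution of the radial chemotaxis system with parameter ε on
[a,b]×[0,T]: continuity on the closed rectangle, enough smoothness up to the
lateral boundary for all derivatives appearing in the equations and estimates,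
the equations pointwise, the initial, no-flux and (when ε > 0) Robin boundary
conditions, and the sign conditions w ≥ 0, c > 0. -/
structure IsClassicalSolution (a b T : ℝ) (n : ℕ) (lam κ ε : ℝ)
    (w₀ c₀ : ℝ → ℝ) (w c : ℝ → ℝ → ℝ) : Prop where
  cont_w : ContinuousOn (Function.uncurry w) (Set.Icc a b ×ˢ Set.Icc 0 T)
  cont_c : ContinuousOn (Function.uncurry c) (Set.Icc a b ×ˢ Set.Icc 0 T)
  smooth_w_space : ∀ t ∈ Set.Ioc (0:ℝ) T, ContDiffOn ℝ 3 (fun r => w r t) (Set.Icc a b)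
  smooth_c_space : ∀ t ∈ Set.Ioc (0:ℝ) T, ContDiffOn ℝ 3 (fun r => c r t) (Set.Icc a b)
  smooth_wt_space : ∀ t ∈ Set.Ioc (0:ℝ) T, ContDiffOn ℝ 1 (fun r => dt w r t) (Set.Icc a b)
  smooth_ct_space : ∀ t ∈ Set.Ioc (0:ℝ) T, ContDiffOn ℝ 1 (fun r => dt c r t) (Set.Icc a b)
  diff_w_time : ∀ r ∈ Set.Icc a b, ∀ t ∈ Set.Ioc (0:ℝ) T, DifferentiableAt ℝ (fun s => w r s) t
  diff_c_time : ∀ r ∈ Set.Icc a b, ∀ t ∈ Set.Ioc (0:ℝ) T, DifferentiableAt ℝ (fun s => c r s) t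
  eq_w : ∀ r ∈ Set.Ioo a b, ∀ t ∈ Set.Ioc (0:ℝ) T,
    dt w r t = dr (dr w) r t + ((n : ℝ) - 1) / r * dr w r t
      - dr (fun s τ => w s τ * dr c s τ) r t - ((n : ℝ) - 1) / r * (w r t * dr c r t)
  eq_c : ∀ r ∈ Set.Ioo a b, ∀ t ∈ Set.Ioc (0:ℝ) T,
    dt c r t = ε * dr (dr c) r t + ε * (((n : ℝ) - 1) / r) * dr c r t - w r t * c r t
  init_w : ∀ r ∈ Set.Icc a b, w r 0 = w₀ r
  init_c : ∀ r ∈ Set.Icc a b, c r 0 = c₀ r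
  bc_w : ∀ t ∈ Set.Ioc (0:ℝ) T,
    dr w a t - w a t * dr c a t = 0 ∧ dr w b t - w b t * dr c b t = 0
  bc_c : 0 < ε → ∀ t ∈ Set.Ioc (0:ℝ) T,
    dr c a t = -κ * (lam - c a t) ∧ dr c b t = κ * (lam - c b t)
  w_nonneg : ∀ r ∈ Set.Ioo a b, ∀ t ∈ Set.Ioc (0:ℝ) T, 0 ≤ w r t
  c_pos : ∀ r ∈ Set.Ioo a b, ∀ t ∈ Set.Ioc (0:ℝ) T, 0 < c r t

/-- The boundary quantity E_x(t) (for x = a or x = b). -/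
def Efun (lam : ℝ) (c₀ : ℝ → ℝ) (x : ℝ) (w c : ℝ → ℝ → ℝ) (t : ℝ) : ℝ :=
  c₀ x * Real.exp (-(∫ τ in (0:ℝ)..t, w x τ)) *
      (1 - Real.exp (-(∫ τ in (0:ℝ)..t, w x τ * c x τ)))
    - lam * (1 - Real.exp (-(∫ τ in (0:ℝ)..t, w x τ * (c x τ + 1))))

/-!
At a boundary point `x` the `ε = 0` equation for `c` is the linear ODE `c_t = -w c` (it holds up
to the boundary by continuity in `r`), so with `A(t) = ∫₀ᵗ w(x,τ) dτ` we get
`c(x,t) = c₀(x) e^{-A(t)}` and `∫₀ᵗ w c = c₀(x) (1 - e^{-A(t)})`. Hence `E_x(t) = g(A(t))` for an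
explicit real-analytic `g` that is negative for large arguments, so the zeros of `g` are isolated.
Near a time `t₀` with `w(x,t₀) > 0`, `A` has nonzero derivative, so it takes values close to but
different from `A(t₀)` at times where `w(x,·)` is still positive; there `g ∘ A` does not vanish.
-/

open Set Filter Topology MeasureTheory Real

def boundaryProfile (C₀ lam x : ℝ) : ℝ :=
  C₀ * exp (-x) * (1 - exp (-(C₀ * (1 - exp (-x)))))
    - lam * (1 - exp (-(C₀ * (1 - exp (-x)) + x)))

theorem analyticOnNhd_boundaryProfile (C₀ lam : ℝ) :
    AnalyticOnNhd ℝ (boundaryProfile C₀ lam) univ := by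
  intro x _
  unfold boundaryProfile
  fun_prop

theorem exists_boundaryProfile_neg {C₀ lam : ℝ} (hC₀ : 0 < C₀) (hlam : 0 < lam) :
    ∃ x, boundaryProfile C₀ lam x < 0 := by
  obtain ⟨x, hx, hex⟩ := ((eventually_ge_atTop 0).and
    (tendsto_exp_neg_atTop_nhds_zero.eventually
      (gt_mem_nhds (div_pos hlam (add_pos hC₀ hlam))))).exists
  refine ⟨x, ?_⟩
  have hP : 0 ≤ C₀ * (1 - exp (-x)) :=
    mul_nonneg hC₀.le (sub_nonneg.2 (exp_le_one_iff.2 (neg_nonpos.2 hx)))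
  have h₁ : 0 < exp (-(C₀ * (1 - exp (-x)))) := exp_pos _
  have h₂ : exp (-(C₀ * (1 - exp (-x)) + x)) ≤ exp (-x) := exp_le_exp.2 (by linarith)
  have h₃ : (C₀ + lam) * exp (-x) < lam := (lt_div_iff₀' (by positivity)).1 hex
  unfold boundaryProfile
  nlinarith [mul_pos (mul_pos hC₀ (exp_pos (-x))) h₁, mul_le_mul_of_nonneg_left h₂ hlam.le]

theorem eventually_boundaryProfile_ne_zero {C₀ lam : ℝ} (hC₀ : 0 < C₀) (hlam : 0 < lam)
    (x₀ : ℝ) : ∀ᶠ x in 𝓝[≠] x₀, boundaryProfile C₀ lam x ≠ 0 := by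
  obtain ⟨X, hX⟩ := exists_boundaryProfile_neg hC₀ hlam
  by_contra h
  have hzero := (analyticOnNhd_boundaryProfile C₀ lam).eq_of_frequently_eq analyticOnNhd_const
    (not_eventually.1 h |>.mono fun _ => not_not.1)
  exact hX.ne (congrFun hzero X)

theorem hasDerivWithinAt_integral_Icc {E : Type*} [NormedAddCommGroup E] [NormedSpace ℝ E]
    [CompleteSpace E] {f : ℝ → E} {a b x : ℝ} (hf : ContinuousOn f (Icc a b))
    (hx : x ∈ Icc a b) : HasDerivWithinAt (fun u => ∫ τ in a..u, f τ) (f x) (Icc a b) x := by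
  have : Fact (x ∈ Icc a b) := ⟨hx⟩
  exact intervalIntegral.integral_hasDerivWithinAt_right
    ((hf.mono (Icc_subset_Icc le_rfl hx.2)).intervalIntegrable_of_Icc hx.1)
    (hf.stronglyMeasurableAtFilter_nhdsWithin measurableSet_Icc x) (hf x hx)

theorem nhdsWithin_Icc_diff_singleton_neBot {a b x : ℝ} (hab : a < b) (hx : x ∈ Icc a b) :
    (𝓝[Icc a b \ {x}] x).NeBot := by
  rw [← mem_closure_iff_nhdsWithin_neBot]
  have : Ioo a b ⊆ closure (Ioo a b ∩ {x}ᶜ) :=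
    dense_compl_singleton x |>.open_subset_closure_inter isOpen_Ioo
  rw [← closure_Ioo hab.ne] at hx
  exact closure_mono (inter_subset_inter_left _ Ioo_subset_Icc_self)
    (closure_minimal this isClosed_closure hx)

section LinearDecay

variable {W C : ℝ → ℝ} {a b : ℝ}

theorem eq_mul_exp_neg_integral_of_hasDerivAt (hW : ContinuousOn W (Icc a b))
    (hC : ContinuousOn C (Icc a b)) (hode : ∀ t ∈ Ioo a b, HasDerivAt C (-(W t * C t)) t)
    {t : ℝ} (ht : t ∈ Icc a b) : C t = C a * exp (-∫ τ in a..t, W τ) := by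
  set A := fun u => ∫ τ in a..u, W τ
  have hA : ∀ u ∈ Icc a b, HasDerivWithinAt A (W u) (Icc a b) u :=
    fun u hu => hasDerivWithinAt_integral_Icc hW hu
  have hAc : ContinuousOn A (Icc a b) := fun u hu => (hA u hu).continuousWithinAt
  suffices C t * exp (A t) = C a * exp (A a) by
    rw [exp_neg, eq_mul_inv_iff_mul_eq₀ (exp_pos _).ne', this]
    simp [A]
  rcases ht.1.eq_or_lt with rfl | hat
  · rfl
  have hsub : Icc a t ⊆ Icc a b := Icc_subset_Icc le_rfl ht.2
  obtain ⟨s, -, hs⟩ := exists_hasDerivAt_eq_slope (fun u => C u * exp (A u)) (fun _ => 0) hat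
    ((hC.mono hsub).mul (hAc.mono hsub).rexp)
    fun u hu => by
      have hu' : u ∈ Ioo a b := ⟨hu.1, hu.2.trans_le ht.2⟩
      exact ((hode u hu').mul ((hA u (Ioo_subset_Icc_self hu')).hasDerivAt
        (Icc_mem_nhds hu'.1 hu'.2)).exp).congr_deriv (by ring)
  rw [eq_comm, div_eq_zero_iff, sub_eq_zero] at hs
  exact hs.resolve_right (sub_ne_zero.2 hat.ne')

theorem integral_mul_eq_sub_of_hasDerivAt (hW : ContinuousOn W (Icc a b))
    (hC : ContinuousOn C (Icc a b)) (hode : ∀ t ∈ Ioo a b, HasDerivAt C (-(W t * C t)) t)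
    {t : ℝ} (ht : t ∈ Icc a b) : ∫ τ in a..t, W τ * C τ = C a - C t := by
  have hsub : Icc a t ⊆ Icc a b := Icc_subset_Icc le_rfl ht.2
  have := intervalIntegral.integral_eq_sub_of_hasDerivAt_of_le ht.1 (hC.mono hsub)
    (fun u hu => hode u ⟨hu.1, hu.2.trans_le ht.2⟩)
    ((hW.mul hC).neg.mono hsub |>.intervalIntegrable_of_Icc ht.1)
  rw [intervalIntegral.integral_neg] at this
  linarith

end LinearDecay

theorem exists_comp_integral_ne_zero_of_pos {g W : ℝ → ℝ} {a b t₀ : ℝ} (hab : a < b)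
    (hW : ContinuousOn W (Icc a b)) (ht₀ : t₀ ∈ Icc a b) (hWt₀ : 0 < W t₀)
    (hg : ∀ᶠ z in 𝓝[≠] (∫ τ in a..t₀, W τ), g z ≠ 0) :
    ∃ t ∈ Icc a b, g (∫ τ in a..t, W τ) ≠ 0 ∧ 0 < W t := by
  have := nhdsWithin_Icc_diff_singleton_neBot hab ht₀
  have hA := (hasDerivWithinAt_integral_Icc hW ht₀).tendsto_nhdsWithin_nhdsNE hWt₀.ne'
  have hpos : ∀ᶠ t in 𝓝[Icc a b] t₀, t ∈ Icc a b ∧ 0 < W t :=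
    eventually_mem_nhdsWithin.and ((hW t₀ ht₀).eventually (lt_mem_nhds hWt₀))
  obtain ⟨t, hgt, htW⟩ := ((hA.eventually hg).and (nhdsWithin_mono _ sdiff_subset hpos)).exists
  exact ⟨t, htW.1, hgt, htW.2⟩

theorem Efun_eq_boundaryProfile {w c : ℝ → ℝ → ℝ} {c₀ : ℝ → ℝ} {lam x T t : ℝ}
    (hw : ContinuousOn (w x) (Icc 0 T)) (hc : ContinuousOn (c x) (Icc 0 T))
    (hode : ∀ t ∈ Ioo 0 T, HasDerivAt (c x) (-(w x t * c x t)) t) (hc₀ : c x 0 = c₀ x)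
    (ht : t ∈ Icc 0 T) :
    Efun lam c₀ x w c t = boundaryProfile (c₀ x) lam (∫ τ in 0..t, w x τ) := by
  have hint : ∀ f : ℝ → ℝ, ContinuousOn f (Icc 0 T) → IntervalIntegrable f volume 0 t :=
    fun f hf => (hf.mono (Icc_subset_Icc le_rfl ht.2)).intervalIntegrable_of_Icc ht.1
  have hwc : ∫ τ in 0..t, w x τ * c x τ = c₀ x * (1 - exp (-∫ τ in 0..t, w x τ)) := by
    rw [integral_mul_eq_sub_of_hasDerivAt hw hc hode ht,
      eq_mul_exp_neg_integral_of_hasDerivAt hw hc hode ht, hc₀]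
    ring
  have hwc₁ : ∫ τ in 0..t, w x τ * (c x τ + 1)
      = (∫ τ in 0..t, w x τ * c x τ) + ∫ τ in 0..t, w x τ := by
    simp only [mul_add, mul_one]
    exact intervalIntegral.integral_add (hint _ (hw.mul hc)) (hint _ hw)
  rw [Efun, boundaryProfile, hwc₁, hwc]

namespace IsClassicalSolution

variable {a b T lam κ : ℝ} {n : ℕ} {w₀ c₀ : ℝ → ℝ} {w c : ℝ → ℝ → ℝ}

theorem hasDerivAt_time_of_mem_Icc (hsol : IsClassicalSolution a b T n lam κ 0 w₀ c₀ w c)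
    (hab : a < b) {x t : ℝ} (hx : x ∈ Icc a b) (ht : t ∈ Ioc 0 T) :
    HasDerivAt (c x) (-(w x t * c x t)) t := by
  have heq : EqOn (fun r => dt c r t) (fun r => -(w r t * c r t)) (Icc a b) :=
    EqOn.of_subset_closure (fun r hr => by simpa using hsol.eq_c r hr t ht)
      (hsol.smooth_ct_space t ht).continuousOn
      ((hsol.smooth_w_space t ht).continuousOn.mul (hsol.smooth_c_space t ht).continuousOn).neg
      Ioo_subset_Icc_self (closure_Ioo hab.ne).ge
  exact (hsol.diff_c_time x hx t ht).hasDerivAt.congr_deriv (heq hx)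

theorem exists_Efun_ne_zero (hsol : IsClassicalSolution a b T n lam κ 0 w₀ c₀ w c)
    (hab : a < b) (hT : 0 < T) (hlam : 0 < lam) {x : ℝ} (hx : x ∈ Icc a b)
    (hc₀ : 0 < c₀ x) (hw : ∃ t ∈ Icc 0 T, 0 < w x t) :
    ∃ t ∈ Icc 0 T, Efun lam c₀ x w c t ≠ 0 ∧ 0 < w x t := by
  obtain ⟨t₀, ht₀, hwt₀⟩ := hw
  have hwx := hsol.cont_w.uncurry_left x hx
  have hcx := hsol.cont_c.uncurry_left x hx
  have hode : ∀ t ∈ Ioo 0 T, HasDerivAt (c x) (-(w x t * c x t)) t :=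
    fun t ht => hsol.hasDerivAt_time_of_mem_Icc hab hx (Ioo_subset_Ioc_self ht)
  obtain ⟨t, ht, hE, hwt⟩ := exists_comp_integral_ne_zero_of_pos hT hwx ht₀ hwt₀
    (eventually_boundaryProfile_ne_zero hc₀ hlam _)
  exact ⟨t, ht, by rwa [Efun_eq_boundaryProfile hwx hcx hode (hsol.init_c x hx) ht], hwt⟩

end IsClassicalSolution

theorem stmt17_general (a b T lam κ : ℝ) (n : ℕ) (hab : a < b)
    (hT : 0 < T) (hlam : 0 < lam)
    (w₀ c₀ : ℝ → ℝ) (hdata : InitData a b lam κ 2 3 w₀ c₀)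
    (w0 c0 : ℝ → ℝ → ℝ)
    (hsol0 : IsClassicalSolution a b T n lam κ 0 w₀ c₀ w0 c0) :
    ((∃ t ∈ Set.Icc (0:ℝ) T, 0 < w0 a t) →
      ∃ t₁ ∈ Set.Icc (0:ℝ) T, Efun lam c₀ a w0 c0 t₁ ≠ 0 ∧ 0 < w0 a t₁)
    ∧ ((∃ t ∈ Set.Icc (0:ℝ) T, 0 < w0 b t) →
      ∃ t₂ ∈ Set.Icc (0:ℝ) T, Efun lam c₀ b w0 c0 t₂ ≠ 0 ∧ 0 < w0 b t₂) :=
  have ha := left_mem_Icc.2 hab.le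
  have hb := right_mem_Icc.2 hab.le
  ⟨hsol0.exists_Efun_ne_zero hab hT hlam ha (hdata.c0_pos a ha),
    hsol0.exists_Efun_ne_zero hab hT hlam hb (hdata.c0_pos b hb)⟩

theorem stmt17 (a b T lam κ : ℝ) (n : ℕ) (ha : 0 < a) (hab : a < b) (hn : 1 ≤ n)
    (hT : 0 < T) (hlam : 0 < lam) (hκ : 0 ≤ κ)
    (w₀ c₀ : ℝ → ℝ) (hdata : InitData a b lam κ 2 3 w₀ c₀)
    (w0 c0 : ℝ → ℝ → ℝ)
    (hsol0 : IsClassicalSolution a b T n lam κ 0 w₀ c₀ w0 c0) :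
    ((∃ t ∈ Set.Icc (0:ℝ) T, 0 < w0 a t) →
      ∃ t₁ ∈ Set.Icc (0:ℝ) T, Efun lam c₀ a w0 c0 t₁ ≠ 0 ∧ 0 < w0 a t₁)
    ∧ ((∃ t ∈ Set.Icc (0:ℝ) T, 0 < w0 b t) →
      ∃ t₂ ∈ Set.Icc (0:ℝ) T, Efun lam c₀ b w0 c0 t₂ ≠ 0 ∧ 0 < w0 b t₂) :=
  stmt17_general a b T lam κ n hab hT hlam w₀ c₀ hdata w0 c0 hsol0

end
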